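/- Let A ∈ ASM(n) and let w be an n×n partial permutation matrix with w ≥ A, i.e. r_w(i,j) ≤ r_A(i,j) for all 1 ≤ i,j ≤ n. Then there exists an honest permutation w' ∈ S_n with A ≤ w' ≤ w, i.e. r_w(i,j) ≤ r_{w'}(i,j) ≤ r_A(i,j) for all 1 ≤ i,j ≤ n. Consequently, the minimal elements of the set of partial permutation matrices lying above A are honest permutation matrices. -/

import Mathlib

/-- The entry of an `n × n` integer matrix in 1-based coordinates;
`0` outside the grid `[1,n] × [1,n]`. -/
def entry1 {n : ℕ} (A : Matrix (Fin n) (Fin n) ℤ) (i j : ℕ) : ℤ :=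
  if h : 1 ≤ i ∧ i ≤ n ∧ 1 ≤ j ∧ j ≤ n then
    A ⟨i - 1, by omega⟩ ⟨j - 1, by omega⟩ else 0

/-- The corner sum `r_A(i,j) = ∑_{k ≤ i} ∑_{l ≤ j} a_{k l}` (1-based). -/
def cornerSum {n : ℕ} (A : Matrix (Fin n) (Fin n) ℤ) (i j : ℕ) : ℤ :=
  ∑ k ∈ Finset.Icc 1 i, ∑ l ∈ Finset.Icc 1 j, entry1 A k l

/-- Partial row sum `∑_{l=1}^{j} a_{i l}`. -/
def rowPartial {n : ℕ} (A : Matrix (Fin n) (Fin n) ℤ) (i j : ℕ) : ℤ :=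
  ∑ l ∈ Finset.Icc 1 j, entry1 A i l

/-- Partial column sum `∑_{k=1}^{i} a_{k j}`. -/
def colPartial {n : ℕ} (A : Matrix (Fin n) (Fin n) ℤ) (i j : ℕ) : ℤ :=
  ∑ k ∈ Finset.Icc 1 i, entry1 A k j

/-- `A` is an alternating sign matrix: every partial row and column sum is `0`
or `1`, and every full row and column sums to `1`. -/
def IsASM {n : ℕ} (A : Matrix (Fin n) (Fin n) ℤ) : Prop :=
  (∀ i j : ℕ, rowPartial A i j = 0 ∨ rowPartial A i j = 1) ∧
  (∀ i j : ℕ, colPartial A i j = 0 ∨ colPartial A i j = 1) ∧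
  (∀ i : ℕ, 1 ≤ i → i ≤ n → rowPartial A i n = 1) ∧
  (∀ j : ℕ, 1 ≤ j → j ≤ n → colPartial A n j = 1)

/-- `A` is a partial alternating sign matrix: every partial row and column sum
is `0` or `1`. -/
def IsPartialASM {n : ℕ} (A : Matrix (Fin n) (Fin n) ℤ) : Prop :=
  (∀ i j : ℕ, rowPartial A i j = 0 ∨ rowPartial A i j = 1) ∧
  (∀ i j : ℕ, colPartial A i j = 0 ∨ colPartial A i j = 1)

/-- `(i,j)` (1-based) is in the Rothe diagram `D(A)`:
`∑_{k > i, l > j} a_{i l} a_{k j} = 1`. -/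
def InDiagram {n : ℕ} (A : Matrix (Fin n) (Fin n) ℤ) (i j : ℕ) : Prop :=
  (∑ k ∈ Finset.Icc 1 n, ∑ l ∈ Finset.Icc 1 n,
    (if i < k ∧ j < l then entry1 A i l * entry1 A k j else 0)) = 1

/-- `(i,j)` is in the essential set `Ess(A)`. -/
def InEss {n : ℕ} (A : Matrix (Fin n) (Fin n) ℤ) (i j : ℕ) : Prop :=
  InDiagram A i j ∧ ¬ InDiagram A (i + 1) j ∧ ¬ InDiagram A i (j + 1)

/-- The permutation matrix of `w` (a `1` in positions `(a, w a)`). -/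
def permMatrix {n : ℕ} (w : Equiv.Perm (Fin n)) : Matrix (Fin n) (Fin n) ℤ :=
  Matrix.of fun a b => if w a = b then 1 else 0

/-- The value `w(a)` of the permutation `w` in 1-based coordinates, extended by
the identity outside `[1,n]`. -/
def pval {n : ℕ} (w : Equiv.Perm (Fin n)) (a : ℕ) : ℕ :=
  if h : 1 ≤ a ∧ a ≤ n then ((w ⟨a - 1, by omega⟩ : Fin n) : ℕ) + 1 else a

/-- The value function (1-based) of the biGrassmannian permutation `[i,j,r]_b`. -/
def biGrFun (i j r a : ℕ) : ℕ :=
  if a ≤ r then a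
  else if a ≤ i then a + (j - r)
  else if a ≤ i + j - r then a - (i - r)
  else a

/-- The permutation matrix of the biGrassmannian permutation `[i,j,r]_b ∈ S_n`. -/
def biGrMatrix (n i j r : ℕ) : Matrix (Fin n) (Fin n) ℤ :=
  Matrix.of fun a b => if biGrFun i j r ((a : ℕ) + 1) = (b : ℕ) + 1 then 1 else 0

/-- `u ∈ S_n` is the biGrassmannian permutation `[i,j,r]_b`, i.e. its values
are given by the defining formula. -/
def IsBiGrPerm (n i j r : ℕ) (u : Equiv.Perm (Fin n)) : Prop :=
  ∀ a : ℕ, 1 ≤ a → a ≤ n → pval u a = biGrFun i j r a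

/-- `(a,b)` (1-based) is in the Rothe diagram of the permutation `w`:
`w(a) > b` and `w⁻¹(b) > a`. -/
def InPermDiagram {n : ℕ} (w : Equiv.Perm (Fin n)) (a b : ℕ) : Prop :=
  1 ≤ a ∧ a ≤ n ∧ 1 ≤ b ∧ b ≤ n ∧ b < pval w a ∧ a < pval w⁻¹ b

/-- `(a,b)` is in the essential set of the permutation `w`. -/
def InPermEss {n : ℕ} (w : Equiv.Perm (Fin n)) (a b : ℕ) : Prop :=
  InPermDiagram w a b ∧ ¬ InPermDiagram w (a + 1) b ∧ ¬ InPermDiagram w a (b + 1)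

/-- `w` has a descent at (1-based) position `d`: `w(d) > w(d+1)`. -/
def HasDescentAt {n : ℕ} (w : Equiv.Perm (Fin n)) (d : ℕ) : Prop :=
  1 ≤ d ∧ d < n ∧ pval w (d + 1) < pval w d

/-- `u` is biGrassmannian: both `u` and `u⁻¹` have a unique descent. -/
def IsBiGrassmannian {n : ℕ} (u : Equiv.Perm (Fin n)) : Prop :=
  (∃! d : ℕ, HasDescentAt u d) ∧ (∃! d : ℕ, HasDescentAt u⁻¹ d)

/-- A partial permutation matrix: a 0-1 matrix with at most one `1` in each
row and each column. -/
def IsPartialPermMatrix {n : ℕ} (w : Matrix (Fin n) (Fin n) ℤ) : Prop :=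
  (∀ a b : Fin n, w a b = 0 ∨ w a b = 1) ∧
  (∀ a : Fin n, (∑ b : Fin n, w a b) ≤ 1) ∧
  (∀ b : Fin n, (∑ a : Fin n, w a b) ≤ 1)

/-!
Build `w'` row by row. If the first `k` rows use the column set `S`, the `1` of row `k + 1` goes
into the largest free column `c` with `r_w(k + 1, t) ≤ #(S ∩ [1, t])` for all `t < c`; for `t ≥ c`
the lower bound at row `k + 1` then follows from the one at row `k`. The invariant carried along
is `#(S ∩ (j, j']) ≤ r_A(m, j') - r_w(m, j)` for all `m ≥ k` and `j ≤ j'`, which is necessary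
because `S` lies inside the columns of the first `m` rows; at `m = k` it gives
`r_w ≤ r_{w'} ≤ r_A`. It survives the greedy step because `r_w` has nonnegative mixed
differences and steps of at most one in each direction, and `r_A(m, j) ≥ j + m - n`.
-/

open Finset

section CornerSums

variable {n : ℕ}

lemma cornerSum_zero_left (M : Matrix (Fin n) (Fin n) ℤ) (j : ℕ) : cornerSum M 0 j = 0 := by
  simp [cornerSum]

lemma cornerSum_zero_right (M : Matrix (Fin n) (Fin n) ℤ) (i : ℕ) : cornerSum M i 0 = 0 := by
  simp [cornerSum]

lemma cornerSum_eq_sum_Ioc (M : Matrix (Fin n) (Fin n) ℤ) (i j : ℕ) :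
    cornerSum M i j = ∑ k ∈ Ioc 0 i, ∑ l ∈ Ioc 0 j, entry1 M k l :=
  rfl

lemma cornerSum_succ_left (M : Matrix (Fin n) (Fin n) ℤ) (i j : ℕ) :
    cornerSum M (i + 1) j = cornerSum M i j + rowPartial M (i + 1) j :=
  sum_Icc_succ_top (by omega) _

lemma cornerSum_add_cornerSum (M : Matrix (Fin n) (Fin n) ℤ) {i i' j j' : ℕ}
    (hi : i ≤ i') (hj : j ≤ j') :
    cornerSum M i' j' + cornerSum M i j = cornerSum M i j' + cornerSum M i' j +
      ∑ k ∈ Ioc i i', ∑ l ∈ Ioc j j', entry1 M k l := by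
  have hcol : ∀ r, cornerSum M r j' =
      cornerSum M r j + ∑ k ∈ Ioc 0 r, ∑ l ∈ Ioc j j', entry1 M k l := fun r => by
    simp only [cornerSum_eq_sum_Ioc, ← sum_add_distrib]
    exact sum_congr rfl fun k _ => (sum_Ioc_consecutive _ (Nat.zero_le j) hj).symm
  rw [hcol i', hcol i, ← sum_Ioc_consecutive _ (Nat.zero_le i) hi]
  ring

lemma entry1_eq_zero {M : Matrix (Fin n) (Fin n) ℤ} {i j : ℕ}
    (h : ¬(1 ≤ i ∧ i ≤ n ∧ 1 ≤ j ∧ j ≤ n)) : entry1 M i j = 0 :=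
  dif_neg h

lemma entry1_transpose (M : Matrix (Fin n) (Fin n) ℤ) (i j : ℕ) :
    entry1 M.transpose i j = entry1 M j i := by
  unfold entry1
  by_cases h : 1 ≤ i ∧ i ≤ n ∧ 1 ≤ j ∧ j ≤ n
  · rw [dif_pos h, dif_pos (by omega), Matrix.transpose_apply]
  · rw [dif_neg h, dif_neg (by omega)]

lemma sum_entry1_Icc (M : Matrix (Fin n) (Fin n) ℤ) (a : Fin n) :
    ∑ l ∈ Icc 1 n, entry1 M (a + 1) l = ∑ b, M a b := by
  calc ∑ l ∈ Icc 1 n, entry1 M (a + 1) l = ∑ b ∈ range n, entry1 M (a + 1) (b + 1) := by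
        apply sum_nbij' (· - 1) (· + 1) <;> intros <;> simp_all; omega
    _ = ∑ b : Fin n, entry1 M (a + 1) (b + 1) := (Fin.sum_univ_eq_sum_range _ n).symm
    _ = ∑ b, M a b := sum_congr rfl fun b _ => by rw [entry1, dif_pos (by omega)]; rfl

end CornerSums

section PartialPermMatrix

variable {n : ℕ} {w : Matrix (Fin n) (Fin n) ℤ}

lemma IsPartialPermMatrix.transpose (hw : IsPartialPermMatrix w) :
    IsPartialPermMatrix w.transpose :=
  ⟨fun a b => hw.1 b a, hw.2.2, hw.2.1⟩

lemma IsPartialPermMatrix.entry1_nonneg (hw : IsPartialPermMatrix w) (i j : ℕ) :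
    0 ≤ entry1 w i j := by
  unfold entry1
  split_ifs with h
  · obtain h | h := hw.1 ⟨i - 1, by omega⟩ ⟨j - 1, by omega⟩ <;> simp [h]
  · rfl

lemma IsPartialPermMatrix.sum_row_le_one (hw : IsPartialPermMatrix w) (k : ℕ) (s : Finset ℕ) :
    ∑ l ∈ s, entry1 w k l ≤ 1 := by
  by_cases hk : 1 ≤ k ∧ k ≤ n
  · obtain ⟨a, rfl⟩ : ∃ a : Fin n, k = a + 1 := ⟨⟨k - 1, by omega⟩, by simp; omega⟩
    calc ∑ l ∈ s, entry1 w (a + 1) l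
        ≤ ∑ l ∈ s ∪ Icc 1 n, entry1 w (a + 1) l :=
          sum_le_sum_of_subset_of_nonneg subset_union_left fun _ _ _ => hw.entry1_nonneg _ _
      _ = ∑ l ∈ Icc 1 n, entry1 w (a + 1) l :=
          (sum_subset subset_union_right fun l _ hl =>
            entry1_eq_zero fun h => hl (mem_Icc.2 ⟨h.2.2.1, h.2.2.2⟩)).symm
      _ = ∑ b, w a b := sum_entry1_Icc w a
      _ ≤ 1 := hw.2.1 a
  · rw [sum_eq_zero fun l _ => entry1_eq_zero (by omega)]
    exact zero_le_one

lemma IsPartialPermMatrix.sum_col_le_one (hw : IsPartialPermMatrix w) (l : ℕ) (s : Finset ℕ) :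
    ∑ k ∈ s, entry1 w k l ≤ 1 := by
  simpa only [entry1_transpose] using hw.transpose.sum_row_le_one l s

lemma IsPartialPermMatrix.sum_sum_nonneg (hw : IsPartialPermMatrix w) (s t : Finset ℕ) :
    0 ≤ ∑ k ∈ s, ∑ l ∈ t, entry1 w k l :=
  sum_nonneg fun _ _ => sum_nonneg fun _ _ => hw.entry1_nonneg _ _

lemma IsPartialPermMatrix.sum_sum_le_card_left (hw : IsPartialPermMatrix w) (s t : Finset ℕ) :
    ∑ k ∈ s, ∑ l ∈ t, entry1 w k l ≤ #s :=
  calc ∑ k ∈ s, ∑ l ∈ t, entry1 w k l ≤ ∑ k ∈ s, (1 : ℤ) :=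
        sum_le_sum fun k _ => hw.sum_row_le_one k t
    _ = #s := by simp

lemma IsPartialPermMatrix.sum_sum_le_card_right (hw : IsPartialPermMatrix w) (s t : Finset ℕ) :
    ∑ k ∈ s, ∑ l ∈ t, entry1 w k l ≤ #t := by
  rw [sum_comm]
  calc ∑ l ∈ t, ∑ k ∈ s, entry1 w k l ≤ ∑ l ∈ t, (1 : ℤ) :=
        sum_le_sum fun l _ => hw.sum_col_le_one l s
    _ = #t := by simp

lemma IsPartialPermMatrix.cornerSum_mono_right (hw : IsPartialPermMatrix w) (i : ℕ) {j j' : ℕ}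
    (hj : j ≤ j') : cornerSum w i j ≤ cornerSum w i j' := by
  have := cornerSum_add_cornerSum w (Nat.zero_le i) hj
  have := hw.sum_sum_nonneg (Ioc 0 i) (Ioc j j')
  simp only [cornerSum_zero_left] at *
  omega

lemma IsPartialPermMatrix.cornerSum_le_add_right (hw : IsPartialPermMatrix w) (i : ℕ)
    {j j' : ℕ} (hj : j ≤ j') : cornerSum w i j' ≤ cornerSum w i j + (j' - j) := by
  have := cornerSum_add_cornerSum w (Nat.zero_le i) hj
  have := hw.sum_sum_le_card_right (Ioc 0 i) (Ioc j j')
  simp only [cornerSum_zero_left, Nat.card_Ioc] at *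
  omega

lemma IsPartialPermMatrix.cornerSum_le_add_left (hw : IsPartialPermMatrix w) (j : ℕ)
    {i i' : ℕ} (hi : i ≤ i') : cornerSum w i' j ≤ cornerSum w i j + (i' - i) := by
  have := cornerSum_add_cornerSum w hi (Nat.zero_le j)
  have := hw.sum_sum_le_card_left (Ioc i i') (Ioc 0 j)
  simp only [cornerSum_zero_right, Nat.card_Ioc] at *
  omega

lemma IsPartialPermMatrix.cornerSum_le (hw : IsPartialPermMatrix w) (i j : ℕ) :
    cornerSum w i j ≤ j := by
  simpa [cornerSum_zero_right] using hw.cornerSum_le_add_right i (Nat.zero_le j)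

lemma IsPartialPermMatrix.cornerSum_sub_le_sub (hw : IsPartialPermMatrix w) {i i' j j' : ℕ}
    (hi : i ≤ i') (hj : j ≤ j') :
    cornerSum w i' j - cornerSum w i j ≤ cornerSum w i' j' - cornerSum w i j' := by
  have := cornerSum_add_cornerSum w hi hj
  have := hw.sum_sum_nonneg (Ioc i i') (Ioc j j')
  omega

end PartialPermMatrix

section ASM

variable {n : ℕ} {A : Matrix (Fin n) (Fin n) ℤ}

lemma IsASM.cornerSum_right_eq (hA : IsASM A) {i : ℕ} (hi : i ≤ n) : cornerSum A i n = i := by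
  change ∑ k ∈ Icc 1 i, rowPartial A k n = i
  rw [sum_congr rfl fun k hk => hA.2.2.1 k (mem_Icc.1 hk).1 ((mem_Icc.1 hk).2.trans hi)]
  simp

lemma IsASM.cornerSum_left_eq (hA : IsASM A) {j : ℕ} (hj : j ≤ n) : cornerSum A n j = j := by
  rw [cornerSum, sum_comm]
  change ∑ l ∈ Icc 1 j, colPartial A n l = j
  rw [sum_congr rfl fun l hl => hA.2.2.2 l (mem_Icc.1 hl).1 ((mem_Icc.1 hl).2.trans hj)]
  simp

lemma IsASM.le_cornerSum (hA : IsASM A) {i j : ℕ} (hi : i ≤ n) (hj : j ≤ n) :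
    (j + i - n : ℤ) ≤ cornerSum A i j := by
  have hrect := cornerSum_add_cornerSum A hi (Nat.zero_le j)
  have hrows : ∑ k ∈ Ioc i n, ∑ l ∈ Ioc 0 j, entry1 A k l ≤ #(Ioc i n) :=
    calc ∑ k ∈ Ioc i n, rowPartial A k j ≤ ∑ k ∈ Ioc i n, (1 : ℤ) :=
          sum_le_sum fun k _ => (hA.1 k j).elim (fun h => h.le.trans zero_le_one) le_of_eq
      _ = #(Ioc i n) := by simp
  simp only [cornerSum_zero_right, Nat.card_Ioc, hA.cornerSum_left_eq hj] at *
  omega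

end ASM

/-- If `S` is the set of columns used by the first `k` rows of a permutation matrix `v`, then
`colCount S j = r_v(k, j)`. -/
def colCount (S : Finset ℕ) (j : ℕ) : ℕ :=
  #{x ∈ S | x ≤ j}

section ColCount

variable {S : Finset ℕ}

@[simp]
lemma colCount_empty (j : ℕ) : colCount ∅ j = 0 := by
  simp [colCount]

lemma colCount_insert {c : ℕ} (hc : c ∉ S) (j : ℕ) :
    colCount (insert c S) j = colCount S j + if c ≤ j then 1 else 0 := by
  unfold colCount
  rw [filter_insert]
  split_ifs with h
  · exact card_insert_of_notMem fun h' => hc (mem_filter.1 h').1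
  · rfl

lemma colCount_eq_add_of_Ioc_subset {j t : ℕ} (hjt : j ≤ t) (h : Ioc j t ⊆ S) :
    colCount S t = colCount S j + (t - j) := by
  have hsplit : {x ∈ S | x ≤ t} = {x ∈ S | x ≤ j} ∪ Ioc j t := by
    ext x
    simp only [mem_union, mem_filter, mem_Ioc]
    constructor
    · rintro ⟨hxS, hxt⟩
      by_cases hxj : x ≤ j
      exacts [Or.inl ⟨hxS, hxj⟩, Or.inr ⟨by omega, hxt⟩]
    · rintro (hx | hx)
      · exact ⟨hx.1, hx.2.trans hjt⟩
      · exact ⟨h (mem_Ioc.2 hx), hx.2⟩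
  rw [colCount, hsplit, card_union_of_disjoint, Nat.card_Ioc, colCount]
  exact disjoint_left.2 fun x hx hx' => by simp only [mem_filter, mem_Ioc] at hx hx'; omega

lemma colCount_of_subset_Icc {n : ℕ} (h : S ⊆ Icc 1 n) : colCount S n = #S := by
  rw [colCount, filter_true_of_mem fun x hx => (mem_Icc.1 (h hx)).2]

lemma colCount_zero_of_subset_Icc {n : ℕ} (h : S ⊆ Icc 1 n) : colCount S 0 = 0 := by
  rw [colCount, card_eq_zero, filter_eq_empty_iff]
  intro x hx
  have := mem_Icc.1 (h hx)
  omega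

end ColCount

section Greedy

variable {n : ℕ} {A w : Matrix (Fin n) (Fin n) ℤ}

def Extendable (A w : Matrix (Fin n) (Fin n) ℤ) (k : ℕ) (S : Finset ℕ) : Prop :=
  S ⊆ Icc 1 n ∧ #S = k ∧ ∀ m j j', k ≤ m → m ≤ n → j ≤ j' → j' ≤ n →
    cornerSum w m j + colCount S j' ≤ cornerSum A m j' + colCount S j

/-- Row `m` may put its `1` into column `u` without dropping below `r_w`: for `t < u` its corner
sums stay `colCount S t`. -/
def RespectsLower (w : Matrix (Fin n) (Fin n) ℤ) (m : ℕ) (S : Finset ℕ) (u : ℕ) : Prop :=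
  ∀ t < u, cornerSum w m t ≤ colCount S t

lemma extendable_empty (hw : IsPartialPermMatrix w)
    (h : ∀ i j : ℕ, 1 ≤ i → i ≤ n → 1 ≤ j → j ≤ n → cornerSum w i j ≤ cornerSum A i j) :
    Extendable A w 0 ∅ := by
  refine ⟨empty_subset _, card_empty, fun m j j' _ hm hjj' hj' => ?_⟩
  have hle : cornerSum w m j' ≤ cornerSum A m j' := by
    rcases Nat.eq_zero_or_pos m with rfl | hm0
    · simp [cornerSum_zero_left]
    rcases Nat.eq_zero_or_pos j' with rfl | hj0
    · simp [cornerSum_zero_right]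
    exact h m j' hm0 hm hj0 hj'
  simpa using (hw.cornerSum_mono_right m hjj').trans hle

variable {k m : ℕ} {S : Finset ℕ}

lemma Extendable.le_colCount (hS : Extendable A w k S) (hA : IsASM A) (hk : k ≤ n) {j : ℕ}
    (hj : j ≤ n) : cornerSum w k j ≤ colCount S j := by
  have := hS.2.2 k j n le_rfl hk hj le_rfl
  rw [colCount_of_subset_Icc hS.1, hS.2.1, hA.cornerSum_right_eq hk] at this
  omega

lemma Extendable.colCount_le (hS : Extendable A w k S) (hk : k ≤ n) {j : ℕ} (hj : j ≤ n) :
    colCount S j ≤ cornerSum A k j := by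
  have := hS.2.2 k 0 j le_rfl hk (Nat.zero_le j) hj
  rw [colCount_zero_of_subset_Icc hS.1, cornerSum_zero_right] at this
  omega

lemma Extendable.lt_of_violation (hS : Extendable A w k S) (hw : IsPartialPermMatrix w)
    (hkm : k + 1 ≤ m) (hm : m ≤ n) {j d j' : ℕ} (hjd : j ≤ d) (hdj' : d ≤ j') (hj' : j' ≤ n)
    (hj : cornerSum w (k + 1) j ≤ colCount S j) (hd : colCount S d < cornerSum w (k + 1) d) :
    cornerSum w m j + colCount S j' < cornerSum A m j' + colCount S j := by
  have := hw.cornerSum_sub_le_sub hkm hjd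
  have := hS.2.2 m d j' (by omega) hm hdj' hj'
  omega

lemma Extendable.lt_of_Ioc_subset (hS : Extendable A w k S) (hA : IsASM A)
    (hw : IsPartialPermMatrix w) (hkm : k + 1 ≤ m) (hm : m ≤ n) {j j' : ℕ} (hj' : j' ≤ n)
    (hj : cornerSum w (k + 1) j ≤ colCount S j) (htail : Ioc j' n ⊆ S) :
    cornerSum w m j + colCount S j' < cornerSum A m j' + colCount S j := by
  have hcount := colCount_eq_add_of_Ioc_subset hj' htail
  rw [colCount_of_subset_Icc hS.1, hS.2.1] at hcount
  have := hw.cornerSum_le_add_left j hkm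
  have := hA.le_cornerSum hm hj'
  omega

/-- The least free column beyond `j'` would be admissible: `r_w` grows by at most one per column,
`colCount S` by exactly one across used columns. -/
lemma Ioc_subset_of_forall_le (hw : IsPartialPermMatrix w) {j' : ℕ}
    (hle : ∀ t ≤ j', cornerSum w m t ≤ colCount S t)
    (hmax : ∀ u ∈ Icc 1 n, u ∉ S → RespectsLower w m S u → u ≤ j') : Ioc j' n ⊆ S := by
  by_contra hsub
  obtain ⟨u, hu, humin⟩ := exists_min_image {x ∈ Ioc j' n | x ∉ S} id
    (by simpa [Finset.Nonempty, not_subset] using hsub)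
  simp only [mem_filter, mem_Ioc, id] at hu humin
  refine absurd (hmax u (mem_Icc.2 ⟨by omega, hu.1.2⟩) hu.2 fun t ht => ?_) (by omega)
  by_cases htj : t ≤ j'
  · exact hle t htj
  have hused : Ioc j' t ⊆ S := fun x hx => by
    by_contra hxS
    have := humin x ⟨by simp only [mem_Ioc] at hx; omega, hxS⟩
    simp only [mem_Ioc] at hx
    omega
  have := colCount_eq_add_of_Ioc_subset (by omega) hused
  have := hw.cornerSum_le_add_right m (show j' ≤ t by omega)
  have := hle j' le_rfl
  omega

lemma Extendable.insert_greedy (hS : Extendable A w k S) (hA : IsASM A) (hw : IsPartialPermMatrix w)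
    {c : ℕ} (hc : c ∈ Icc 1 n) (hcS : c ∉ S) (hcL : RespectsLower w (k + 1) S c)
    (hmax : ∀ u ∈ Icc 1 n, u ∉ S → RespectsLower w (k + 1) S u → u ≤ c) :
    Extendable A w (k + 1) (insert c S) := by
  refine ⟨insert_subset hc hS.1, by rw [card_insert_of_notMem hcS, hS.2.1],
    fun m j j' hkm hm hjj' hj' => ?_⟩
  have hold := hS.2.2 m j j' (by omega) hm hjj' hj'
  rw [colCount_insert hcS, colCount_insert hcS]
  by_cases hcj : c ≤ j
  · simp only [hcj, hcj.trans hjj', if_true]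
    push_cast
    omega
  by_cases hcj' : c ≤ j'
  swap
  · simp only [hcj, hcj', if_false]
    omega
  simp only [hcj, hcj', if_true, if_false]
  suffices cornerSum w m j + colCount S j' < cornerSum A m j' + colCount S j by
    push_cast
    omega
  have hj := hcL j (by omega)
  by_cases hviol : ∃ d, c ≤ d ∧ d ≤ j' ∧ colCount S d < cornerSum w (k + 1) d
  · obtain ⟨d, hcd, hdj', hd⟩ := hviol
    exact hS.lt_of_violation hw hkm hm (by omega) hdj' hj' hj hd
  push Not at hviol
  have hle : ∀ t ≤ j', cornerSum w (k + 1) t ≤ colCount S t := fun t ht =>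
    if htc : t < c then hcL t htc else hviol t (by omega) ht
  exact hS.lt_of_Ioc_subset hA hw hkm hm hj' hj
    (Ioc_subset_of_forall_le hw hle fun u hu huS hL => (hmax u hu huS hL).trans hcj')

/-- The least free column respects the lower bound, as all columns before it are used. -/
lemma Extendable.exists_insert (hS : Extendable A w k S) (hA : IsASM A)
    (hw : IsPartialPermMatrix w) (hk : k < n) :
    ∃ c ∈ Icc 1 n, c ∉ S ∧ Extendable A w (k + 1) (insert c S) := by
  classical
  have hfree : (Icc 1 n \ S).Nonempty := by
    rw [← card_pos, card_sdiff_of_subset hS.1, hS.2.1, Nat.card_Icc]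
    omega
  obtain ⟨u₀, hu₀, hu₀min⟩ := exists_min_image _ id hfree
  have hadm : {u ∈ Icc 1 n | u ∉ S ∧ RespectsLower w (k + 1) S u}.Nonempty := by
    refine ⟨u₀, mem_filter.2 ⟨(mem_sdiff.1 hu₀).1, (mem_sdiff.1 hu₀).2, fun t ht => ?_⟩⟩
    have hused : Ioc 0 t ⊆ S := fun x hx => by
      by_contra hxS
      have := hu₀min x (mem_sdiff.2 ⟨mem_Icc.2 ⟨(mem_Ioc.1 hx).1, ?_⟩, hxS⟩)
      · simp only [mem_Ioc, id] at hx this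
        omega
      · have := (mem_Icc.1 (mem_sdiff.1 hu₀).1).2
        simp only [mem_Ioc] at hx
        omega
    have := colCount_eq_add_of_Ioc_subset (Nat.zero_le t) hused
    have := hw.cornerSum_le (k + 1) t
    omega
  obtain ⟨c, hc, hcmax⟩ := exists_max_image _ id hadm
  simp only [mem_filter, id] at hc hcmax
  exact ⟨c, hc.1, hc.2.1, hS.insert_greedy hA hw hc.1 hc.2.1 hc.2.2
    fun u hu huS hL => hcmax u ⟨hu, huS, hL⟩⟩

end Greedy

theorem exists_seq_of_forall_exists {α : Type*} {N : ℕ} (P : ℕ → α → Prop)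
    (R : ℕ → α → α → Prop) {a₀ : α} (h₀ : P 0 a₀)
    (step : ∀ k < N, ∀ a, P k a → ∃ b, P (k + 1) b ∧ R k a b) :
    ∃ s : ℕ → α, s 0 = a₀ ∧ (∀ k ≤ N, P k (s k)) ∧ ∀ k < N, R k (s k) (s (k + 1)) := by
  have : Nonempty α := ⟨a₀⟩
  let s : ℕ → α := fun k =>
    Nat.rec a₀ (fun k a => Classical.epsilon fun b => P (k + 1) b ∧ R k a b) k
  have hs : ∀ k < N, P k (s k) → P (k + 1) (s (k + 1)) ∧ R k (s k) (s (k + 1)) :=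
    fun k hk hP => Classical.epsilon_spec (step k hk _ hP)
  have hP : ∀ k ≤ N, P k (s k) := by
    intro k hk
    induction k with
    | zero => exact h₀
    | succ k ih => exact (hs k (by omega) (ih (by omega))).1
  exact ⟨s, rfl, hP, fun k hk => (hs k hk (hP k hk.le)).2⟩

section PermOfChain

variable {n : ℕ}

lemma rowPartial_permMatrix (σ : Equiv.Perm (Fin n)) (a : Fin n) (j : ℕ) :
    rowPartial (permMatrix σ) (a + 1) j = if (σ a : ℕ) + 1 ≤ j then 1 else 0 := by
  have hentry : ∀ l, entry1 (permMatrix σ) (a + 1) l = if (σ a : ℕ) + 1 = l then 1 else 0 := by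
    intro l
    unfold entry1 permMatrix
    by_cases hl : 1 ≤ l ∧ l ≤ n
    · rw [dif_pos (by omega), Matrix.of_apply]
      refine if_congr ?_ rfl rfl
      rw [Fin.ext_iff]
      simp only [add_tsub_cancel_right, Fin.eta]
      omega
    · rw [dif_neg (by omega), if_neg (by omega)]
  simp only [rowPartial, hentry, sum_ite_eq, mem_Icc]
  exact if_congr (by omega) rfl rfl

theorem exists_perm_cornerSum_eq_colCount {S : ℕ → Finset ℕ} (h₀ : S 0 = ∅)
    (hS : ∀ k < n, ∃ c ∈ Icc 1 n, c ∉ S k ∧ S (k + 1) = insert c (S k)) :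
    ∃ σ : Equiv.Perm (Fin n), ∀ i ≤ n, ∀ j, cornerSum (permMatrix σ) i j = colCount (S i) j := by
  choose c hc hcS hSc using hS
  have hmono : ∀ {a b}, a ≤ b → b ≤ n → S a ⊆ S b := by
    intro a b hab hb
    induction b, hab using Nat.le_induction with
    | base => exact subset_rfl
    | succ b _ ih => exact (ih (by omega)).trans (hSc b (by omega) ▸ subset_insert _ _)
  have hdistinct : ∀ a b (ha : a < n) (hb : b < n), a < b → c a ha ≠ c b hb :=
    fun a b ha hb hab h =>
      hcS b hb (hmono hab hb.le (hSc a ha ▸ h ▸ mem_insert_self _ _))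
  let τ : Fin n → Fin n := fun a => ⟨c a a.2 - 1, by have := mem_Icc.1 (hc a a.2); omega⟩
  have hτ : ∀ a, (τ a : ℕ) + 1 = c a a.2 := fun a => by
    have := mem_Icc.1 (hc a a.2)
    simp only [τ]
    omega
  have hinj : Function.Injective τ := by
    intro a b hab
    have hcab : c a a.2 = c b b.2 := by rw [← hτ, ← hτ, hab]
    rcases lt_trichotomy (a : ℕ) b with h | h | h
    · exact absurd hcab (hdistinct _ _ _ _ h)
    · exact Fin.ext h
    · exact absurd hcab.symm (hdistinct _ _ _ _ h)
  refine ⟨Equiv.ofBijective τ (Finite.injective_iff_bijective.1 hinj), fun i hi j => ?_⟩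
  induction i with
  | zero => simp [cornerSum_zero_left, h₀]
  | succ i ih =>
    rw [cornerSum_succ_left, ih (by omega), hSc i hi, colCount_insert (hcS i hi),
      show i + 1 = ((⟨i, hi⟩ : Fin n) : ℕ) + 1 from rfl, rowPartial_permMatrix]
    simp only [Equiv.ofBijective_apply, hτ]
    push_cast
    rfl

end PermOfChain

/-- Let `A ∈ ASM(n)` and let `w` be a partial permutation matrix
with `w ≥ A` (`r_w ≤ r_A` entrywise).  Then there is an honest permutation
`w' ∈ S_n` with `A ≤ w' ≤ w`, i.e. `r_w(i,j) ≤ r_{w'}(i,j) ≤ r_A(i,j)` for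
all `1 ≤ i,j ≤ n`. -/
theorem stmt14 {n : ℕ} (A w : Matrix (Fin n) (Fin n) ℤ)
    (hA : IsASM A) (hw : IsPartialPermMatrix w)
    (h : ∀ i j : ℕ, 1 ≤ i → i ≤ n → 1 ≤ j → j ≤ n →
      cornerSum w i j ≤ cornerSum A i j) :
    ∃ w' : Equiv.Perm (Fin n), ∀ i j : ℕ, 1 ≤ i → i ≤ n → 1 ≤ j → j ≤ n →
      cornerSum w i j ≤ cornerSum (permMatrix w') i j ∧
      cornerSum (permMatrix w') i j ≤ cornerSum A i j := by
  obtain ⟨S, hS₀, hext, hchain⟩ := exists_seq_of_forall_exists (N := n) (Extendable A w)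
    (fun _ S S' => ∃ c ∈ Icc 1 n, c ∉ S ∧ S' = insert c S) (extendable_empty hw h)
    fun k hk S hS => by
      obtain ⟨c, hc, hcS, hS'⟩ := hS.exists_insert hA hw hk
      exact ⟨_, hS', c, hc, hcS, rfl⟩
  obtain ⟨σ, hσ⟩ := exists_perm_cornerSum_eq_colCount hS₀ hchain
  refine ⟨σ, fun i j _ hi _ hj => ?_⟩
  rw [hσ i hi j]
  exact ⟨(hext i hi).le_colCount hA hi hj, (hext i hi).colCount_le hi hj⟩
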